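/- arXiv:math-ph/0608052 — 3 statements merged into one kernel-verified Lean document; each statement's English description precedes it below -/
import Mathlib

section
/- The Gram matrix of Laguerre polynomials against exponentially weighted ₀F₁ functions is explicit: for a > 0 and integer i ≥ 1, the integral ((−1)^{i−1}(i−1)!/Γ(α+1)) ∫₀^∞ x^α e^{−x} L^α_{i−1}(x) ₀F₁(α+1; a x) dx equals a^{i−1} e^{a}. -/
/-!
Expand `₀F₁(α+1; a x)` as a power series and integrate term by term. Writing
`Γ(α+1+p) = Γ(α+1) (α+1)_p`, the moment `∫ x^(α+k) e^(-x) L^α_n(x) dx` becomes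
`Γ(α+1) (α+1)_n / n!` times `∑_m (-1)^m C(n,m) (α+1+m)_k`. That alternating sum is `(-1)^n` times
the `n`-th forward difference of the rising factorial, i.e. `(-1)^n k(k-1)⋯(k-n+1) (α+1+n)_(k-n)`,
so the moment is `(-1)^n Γ(α+1) k(k-1)⋯(k-n+1) (α+1)_k / n!`. Its factor `(α+1)_k` cancels the
denominator of `₀F₁`, and `∑_k k(k-1)⋯(k-n+1) a^k / k! = a^n e^a`. Term-by-term integration is
legitimate because the integrals of the absolute values are at most
`Γ(α+1) ∑_m |c_m| (α+1+k)_m |a|^k / k!` (with `c_m` the coefficients of `L^α_n`), which is summable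
in `k`.
-/

open Finset in
/-- The confluent hypergeometric function `₀F₁(c; x)`. -/
noncomputable def hyp0F1 (c x : ℝ) : ℝ :=
  ∑' k : ℕ, x ^ k / ((∏ j ∈ range k, (c + j)) * (k.factorial))

open Finset in
/-- The generalized Laguerre polynomial `L^α_n(x)`. -/
noncomputable def laguerreL (α : ℝ) (n : ℕ) (x : ℝ) : ℝ :=
  ∑ k ∈ range (n + 1),
    (-1) ^ k * (∏ j ∈ range (n - k), (α + k + 1 + j)) /
      ((n - k).factorial * k.factorial) * x ^ k

open Finset Nat Real MeasureTheory Set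

section RisingProduct

variable {R : Type*} [CommRing R]

theorem fwdDiff_prod_range_succ_add (k : ℕ) :
    fwdDiff 1 (fun x : R => ∏ j ∈ range (k + 1), (x + j)) =
      fun x : R => (k + 1 : R) * ∏ j ∈ range k, (x + 1 + j) := by
  ext x
  rw [fwdDiff, prod_range_succ, prod_range_succ']
  simp only [Nat.cast_add, Nat.cast_one, Nat.cast_zero, add_zero, ← add_assoc,
    add_right_comm x _ 1]
  ring

theorem fwdDiff_iter_prod_range_add (n k : ℕ) (x : R) :
    (fwdDiff 1)^[n] (fun x : R => ∏ j ∈ range k, (x + j)) x =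
      k.descFactorial n * ∏ j ∈ range (k - n), (x + n + j) := by
  induction n generalizing k x with
  | zero => simp
  | succ n ih =>
    rw [Function.iterate_succ_apply]
    cases k with
    | zero =>
      rw [Function.iterate_fixed (by simp)]
      simp
    | succ k =>
      have hsmul : (fun x : R => (k + 1 : R) * ∏ j ∈ range k, (x + 1 + j)) =
          (k + 1 : R) • fun x : R => ∏ j ∈ range k, (x + 1 + j) := rfl
      rw [fwdDiff_prod_range_succ_add, hsmul, fwdDiff_iter_const_smul, Pi.smul_apply,
        fwdDiff_iter_comp_add 1 (fun x : R => ∏ j ∈ range k, (x + j)), ih,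
        succ_descFactorial_succ, succ_sub_succ]
      push_cast
      ring_nf

theorem prod_range_add_eq_mul_prod_shift (x : R) (m k : ℕ) :
    ∏ j ∈ range (m + k), (x + j) =
      (∏ j ∈ range m, (x + j)) * ∏ j ∈ range k, (x + m + j) := by
  rw [prod_range_add]
  simp only [Nat.cast_add, add_assoc]

theorem sum_range_neg_one_pow_mul_choose_mul_prod (n k : ℕ) (x : R) :
    ∑ m ∈ range (n + 1), (-1) ^ m * (n.choose m : R) * ∏ j ∈ range k, (x + m + j) =
      (-1) ^ n * k.descFactorial n * ∏ j ∈ range (k - n), (x + n + j) := by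
  rw [mul_assoc, ← fwdDiff_iter_prod_range_add, fwdDiff_iter_eq_sum_shift, mul_sum]
  refine sum_congr rfl fun m hm => ?_
  have hsign : (-1 : R) ^ n = (-1) ^ m * (-1) ^ (n - m) := by
    rw [← pow_add, Nat.add_sub_of_le (mem_range_succ_iff.mp hm)]
  have hsq : (-1 : R) ^ (n - m) * (-1) ^ (n - m) = 1 := pow_mul_pow_eq_one _ (by norm_num)
  rw [zsmul_eq_mul, nsmul_one, hsign]
  push_cast
  linear_combination (-(-1 : R) ^ m * n.choose m * ∏ j ∈ range k, (x + m + j)) * hsq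

theorem descFactorial_mul_prod_range_mul_prod_range_sub (n k : ℕ) (x : R) :
    (k.descFactorial n : R) *
        ((∏ j ∈ range n, (x + j)) * ∏ j ∈ range (k - n), (x + n + j)) =
      k.descFactorial n * ∏ j ∈ range k, (x + j) := by
  rcases lt_or_ge k n with hkn | hnk
  · rw [descFactorial_eq_zero_iff_lt.mpr hkn, cast_zero, zero_mul, zero_mul]
  · rw [← prod_range_add_eq_mul_prod_shift, Nat.add_sub_of_le hnk]

end RisingProduct

noncomputable def laguerreCoeff (α : ℝ) (n m : ℕ) : ℝ :=
  (-1) ^ m * (∏ j ∈ range (n - m), (α + m + 1 + j)) / ((n - m) ! * m !)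

theorem laguerreL_eq_sum (α : ℝ) (n : ℕ) (x : ℝ) :
    laguerreL α n x = ∑ m ∈ range (n + 1), laguerreCoeff α n m * x ^ m := rfl

theorem laguerreCoeff_mul_prod_range (α : ℝ) {n m : ℕ} (hmn : m ≤ n) :
    laguerreCoeff α n m * ∏ j ∈ range m, (α + 1 + j) =
      (∏ j ∈ range n, (α + 1 + j)) / n ! * ((-1) ^ m * n.choose m) := by
  obtain ⟨d, rfl⟩ := Nat.exists_eq_add_of_le hmn
  rw [laguerreCoeff, prod_range_add_eq_mul_prod_shift, add_tsub_cancel_left, cast_choose ℝ hmn,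
    add_tsub_cancel_left, add_right_comm α (m : ℝ) 1]
  field_simp

theorem sum_laguerreCoeff_mul_prod_range (α : ℝ) (n k : ℕ) :
    ∑ m ∈ range (n + 1), laguerreCoeff α n m * ∏ j ∈ range (m + k), (α + 1 + j) =
      (-1) ^ n * k.descFactorial n * (∏ j ∈ range k, (α + 1 + j)) / n ! := by
  calc ∑ m ∈ range (n + 1), laguerreCoeff α n m * ∏ j ∈ range (m + k), (α + 1 + j)
      = (∏ j ∈ range n, (α + 1 + j)) / n ! *
          ∑ m ∈ range (n + 1),
            (-1) ^ m * (n.choose m : ℝ) * ∏ j ∈ range k, (α + 1 + m + j) := by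
        rw [mul_sum]
        refine sum_congr rfl fun m hm => ?_
        rw [prod_range_add_eq_mul_prod_shift, ← mul_assoc,
          laguerreCoeff_mul_prod_range α (mem_range_succ_iff.mp hm)]
        ring
    _ = (-1) ^ n * k.descFactorial n * (∏ j ∈ range k, (α + 1 + j)) / n ! := by
        rw [sum_range_neg_one_pow_mul_choose_mul_prod]
        linear_combination ((-1) ^ n / n ! : ℝ) *
          descFactorial_mul_prod_range_mul_prod_range_sub n k (α + 1)

theorem rpow_mul_exp_neg_mul_laguerreL_mul_pow_eq_sum (α : ℝ) (n k : ℕ) (x : ℝ) :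
    x ^ α * exp (-x) * laguerreL α n x * x ^ k =
      ∑ m ∈ range (n + 1), laguerreCoeff α n m * (x ^ α * exp (-x) * x ^ (m + k)) := by
  rw [laguerreL_eq_sum, mul_sum, sum_mul]
  refine sum_congr rfl fun m _ => ?_
  rw [pow_add]
  ring

theorem Gamma_add_nat_eq_prod_mul_Gamma {x : ℝ} (hx : 0 < x) (k : ℕ) :
    Gamma (x + k) = (∏ j ∈ range k, (x + j)) * Gamma x := by
  induction k with
  | zero => simp
  | succ k ih =>
    rw [Nat.cast_succ, ← add_assoc, Gamma_add_one (by positivity), ih, prod_range_succ]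
    ring

theorem summable_prod_range_add_mul_pow_div_factorial {c : ℝ} (hc : 0 ≤ c) (m : ℕ) (r : ℝ) :
    Summable fun k : ℕ => (∏ j ∈ range m, (c + k + j)) * r ^ k / k ! := by
  refine ((summable_pow_div_factorial (exp 1 * |r|)).mul_left (m ! * exp (c + m))).of_norm_bounded
    fun k => ?_
  have hprod : ∏ j ∈ range m, (c + k + j) ≤ m ! * exp (c + m) * exp 1 ^ k := by
    calc ∏ j ∈ range m, (c + k + j) ≤ ∏ _j ∈ range m, (c + k + m) :=
          prod_le_prod (fun j _ => by positivity) fun j hj => by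
            gcongr; exact_mod_cast (mem_range.mp hj).le
      _ = (c + k + m) ^ m := by rw [prod_const, card_range]
      _ ≤ m ! * exp (c + k + m) := by
          have := pow_div_factorial_le_exp (x := c + k + m) (by positivity) m
          rwa [div_le_iff₀' (by positivity)] at this
      _ = m ! * exp (c + m) * exp 1 ^ k := by
          rw [← exp_nat_mul, mul_one, mul_assoc, ← exp_add]
          ring_nf
  rw [norm_div, norm_mul, norm_pow, Real.norm_eq_abs, Real.norm_eq_abs, Real.norm_eq_abs,
    abs_of_nonneg (prod_nonneg fun j _ => by positivity), Nat.abs_cast, mul_pow]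
  calc (∏ j ∈ range m, (c + k + j)) * |r| ^ k / k !
      ≤ m ! * exp (c + m) * exp 1 ^ k * |r| ^ k / k ! := by gcongr
    _ = m ! * exp (c + m) * (exp 1 ^ k * |r| ^ k / k !) := by ring

theorem hasSum_descFactorial_mul_pow_div_factorial (x : ℝ) (n : ℕ) :
    HasSum (fun k : ℕ => k.descFactorial n * x ^ k / k !) (x ^ n * exp x) := by
  have hexp : HasSum (fun k : ℕ => x ^ k / k !) (exp x) := by
    simpa [← Real.exp_eq_exp_ℝ] using NormedSpace.expSeries_div_hasSum_exp x
  have hinitial : ∑ k ∈ range n, (k.descFactorial n : ℝ) * x ^ k / k ! = 0 :=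
    sum_eq_zero fun k hk => by rw [descFactorial_eq_zero_iff_lt.mpr (mem_range.mp hk)]; simp
  rw [← hasSum_nat_add_iff' n, hinitial, sub_zero]
  refine (hexp.mul_left (x ^ n)).congr_fun fun k => ?_
  rw [← factorial_mul_descFactorial (le_add_left n k), add_tsub_cancel_right, pow_add, cast_mul]
  have : ((k + n).descFactorial n : ℝ) ≠ 0 := by
    exact_mod_cast (descFactorial_pos.mpr (le_add_left n k)).ne'
  field_simp

section WeightedIntegrals

variable {α : ℝ}

theorem integrableOn_rpow_mul_exp_neg_mul_pow (hα : -1 < α) (p : ℕ) :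
    IntegrableOn (fun x => x ^ α * exp (-x) * x ^ p) (Ioi 0) := by
  have hs : 0 < α + 1 + p := by linarith [p.cast_nonneg (α := ℝ)]
  refine (GammaIntegral_convergent hs).congr_fun (fun x (hx : 0 < x) => ?_) measurableSet_Ioi
  dsimp only
  rw [show α + 1 + (p : ℝ) - 1 = α + p by ring, rpow_add hx, rpow_natCast]
  ring

theorem integral_rpow_mul_exp_neg_mul_pow (hα : -1 < α) (p : ℕ) :
    ∫ x in Ioi 0, x ^ α * exp (-x) * x ^ p = Gamma (α + 1 + p) := by
  rw [Gamma_eq_integral (by linarith [p.cast_nonneg (α := ℝ)])]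
  refine setIntegral_congr_fun measurableSet_Ioi fun x (hx : 0 < x) => ?_
  rw [show α + 1 + (p : ℝ) - 1 = α + p by ring, rpow_add hx, rpow_natCast]
  ring

theorem integrableOn_laguerreL_mul_pow (hα : -1 < α) (n k : ℕ) :
    IntegrableOn (fun x => x ^ α * exp (-x) * laguerreL α n x * x ^ k) (Ioi 0) := by
  simp_rw [rpow_mul_exp_neg_mul_laguerreL_mul_pow_eq_sum]
  exact integrable_finsetSum _ fun m _ => (integrableOn_rpow_mul_exp_neg_mul_pow hα _).const_mul _

theorem integral_laguerreL_mul_pow (hα : -1 < α) (n k : ℕ) :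
    ∫ x in Ioi 0, x ^ α * exp (-x) * laguerreL α n x * x ^ k =
      (-1) ^ n * Gamma (α + 1) * k.descFactorial n * (∏ j ∈ range k, (α + 1 + j)) / n ! := by
  simp_rw [rpow_mul_exp_neg_mul_laguerreL_mul_pow_eq_sum]
  rw [integral_finsetSum _ fun m _ => (integrableOn_rpow_mul_exp_neg_mul_pow hα _).const_mul _]
  simp_rw [integral_const_mul, integral_rpow_mul_exp_neg_mul_pow hα,
    Gamma_add_nat_eq_prod_mul_Gamma (by linarith : 0 < α + 1), ← mul_assoc, ← sum_mul,
    sum_laguerreCoeff_mul_prod_range]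
  ring

theorem integral_norm_laguerreL_mul_pow_le (hα : -1 < α) (n k : ℕ) :
    ∫ x in Ioi 0, ‖x ^ α * exp (-x) * laguerreL α n x * x ^ k‖ ≤
      ∑ m ∈ range (n + 1), |laguerreCoeff α n m| * Gamma (α + 1 + (m + k : ℕ)) := by
  have hint : ∀ m ∈ range (n + 1), IntegrableOn
      (fun x => |laguerreCoeff α n m| * (x ^ α * exp (-x) * x ^ (m + k))) (Ioi 0) :=
    fun m _ => (integrableOn_rpow_mul_exp_neg_mul_pow hα _).const_mul _
  calc ∫ x in Ioi 0, ‖x ^ α * exp (-x) * laguerreL α n x * x ^ k‖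
      ≤ ∫ x in Ioi 0, ∑ m ∈ range (n + 1),
          |laguerreCoeff α n m| * (x ^ α * exp (-x) * x ^ (m + k)) := by
        refine integral_mono_of_nonneg (.of_forall fun _ => norm_nonneg _)
          (integrable_finsetSum _ hint) ((ae_restrict_iff' measurableSet_Ioi).mpr
            (.of_forall fun x (hx : 0 < x) => ?_))
        dsimp only
        rw [rpow_mul_exp_neg_mul_laguerreL_mul_pow_eq_sum]
        refine (norm_sum_le _ _).trans_eq (sum_congr rfl fun m _ => ?_)
        rw [norm_mul, Real.norm_eq_abs, Real.norm_of_nonneg (by positivity)]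
    _ = ∑ m ∈ range (n + 1), |laguerreCoeff α n m| * Gamma (α + 1 + (m + k : ℕ)) := by
        rw [integral_finsetSum _ hint]
        simp_rw [integral_const_mul, integral_rpow_mul_exp_neg_mul_pow hα]

theorem summable_integral_norm_mul_laguerreL_mul_pow (hα : -1 < α) (a : ℝ) (n : ℕ) :
    Summable fun k : ℕ => ∫ x in Ioi 0,
      ‖a ^ k / ((∏ j ∈ range k, (α + 1 + j)) * k !) *
        (x ^ α * exp (-x) * laguerreL α n x * x ^ k)‖ := by
  have hα' : 0 < α + 1 := by linarith
  refine .of_nonneg_of_le (fun k => integral_nonneg fun _ => norm_nonneg _) (fun k => ?_)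
    (summable_sum (s := range (n + 1)) fun m _ =>
      (summable_prod_range_add_mul_pow_div_factorial hα'.le m |a|).mul_left
        (|laguerreCoeff α n m| * Gamma (α + 1)))
  have hP : 0 < ∏ j ∈ range k, (α + 1 + j) := prod_pos fun j _ => by positivity
  simp_rw [norm_mul (a ^ k / _), integral_const_mul]
  rw [norm_div, norm_mul, norm_pow, Real.norm_eq_abs, Real.norm_of_nonneg hP.le, norm_natCast]
  calc |a| ^ k / ((∏ j ∈ range k, (α + 1 + j)) * k !) *
        ∫ x in Ioi 0, ‖x ^ α * exp (-x) * laguerreL α n x * x ^ k‖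
      ≤ |a| ^ k / ((∏ j ∈ range k, (α + 1 + j)) * k !) *
          ∑ m ∈ range (n + 1), |laguerreCoeff α n m| * Gamma (α + 1 + (m + k : ℕ)) := by
        gcongr
        exact integral_norm_laguerreL_mul_pow_le hα n k
    _ = ∑ m ∈ range (n + 1), |laguerreCoeff α n m| * Gamma (α + 1) *
          ((∏ j ∈ range m, (α + 1 + k + j)) * |a| ^ k / k !) := by
        rw [mul_sum]
        refine sum_congr rfl fun m _ => ?_
        rw [Nat.cast_add, add_comm (m : ℝ), ← add_assoc,
          Gamma_add_nat_eq_prod_mul_Gamma (by positivity), Gamma_add_nat_eq_prod_mul_Gamma hα']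
        field_simp

theorem integral_laguerreL_mul_hyp0F1 (hα : -1 < α) (a : ℝ) (n : ℕ) :
    ∫ x in Ioi 0, x ^ α * exp (-x) * laguerreL α n x * hyp0F1 (α + 1) (a * x) =
      (-1) ^ n * Gamma (α + 1) * a ^ n * exp a / n ! := by
  have hα' : 0 < α + 1 := by linarith
  set F : ℕ → ℝ → ℝ := fun k x => a ^ k / ((∏ j ∈ range k, (α + 1 + j)) * k !) *
    (x ^ α * exp (-x) * laguerreL α n x * x ^ k)
  have hF (x : ℝ) :
      x ^ α * exp (-x) * laguerreL α n x * hyp0F1 (α + 1) (a * x) = ∑' k, F k x := by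
    rw [hyp0F1, ← tsum_mul_left]
    congr with k
    simp only [F, mul_pow]
    ring
  have hsum : HasSum (fun k => ∫ x in Ioi 0, F k x)
      ((-1) ^ n * Gamma (α + 1) / n ! * (a ^ n * exp a)) := by
    refine ((hasSum_descFactorial_mul_pow_div_factorial a n).mul_left _).congr_fun fun k => ?_
    have hP : 0 < ∏ j ∈ range k, (α + 1 + j) := prod_pos fun j _ => by positivity
    simp only [F]
    rw [integral_const_mul, integral_laguerreL_mul_pow hα]
    field_simp
  simp_rw [hF]
  rw [(hasSum_integral_of_summable_integral_norm
    (fun k => (integrableOn_laguerreL_mul_pow hα n k).const_mul _)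
    (summable_integral_norm_mul_laguerreL_mul_pow hα a n)).unique hsum]
  ring

end WeightedIntegrals

open MeasureTheory in
theorem gram_laguerre_hyp0F1_general (α : ℝ) (hα : -1 < α) (a : ℝ)
    (i : ℕ) :
    (-1) ^ (i - 1) * ((i - 1).factorial : ℝ) *
        ∫ x in Set.Ioi (0 : ℝ),
          x ^ α * Real.exp (-x) * laguerreL α (i - 1) x * hyp0F1 (α + 1) (a * x) =
      Real.Gamma (α + 1) * a ^ (i - 1) * Real.exp a := by
  rw [integral_laguerreL_mul_hyp0F1 hα]
  field_simp
  rw [← pow_mul, pow_mul', neg_one_sq, one_pow, one_mul]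

open MeasureTheory in
theorem gram_laguerre_hyp0F1 (α : ℝ) (hα : -1 < α) (a : ℝ) (ha : 0 < a)
    (i : ℕ) (hi : 1 ≤ i) :
    (-1) ^ (i - 1) * ((i - 1).factorial : ℝ) *
        ∫ x in Set.Ioi (0 : ℝ),
          x ^ α * Real.exp (-x) * laguerreL α (i - 1) x * hyp0F1 (α + 1) (a * x) =
      Real.Gamma (α + 1) * a ^ (i - 1) * Real.exp a :=
  gram_laguerre_hyp0F1_general α hα a i
end

section
/- The limit relation between ₀F₁-weights under shifts: w_α(x, a_j) = ∑_{ℓ≥0} ((a_j − a_i)^ℓ / ℓ!) w_{α+ℓ}(x, a_i), with the series converging absolutely for all finite a_i, a_j. -/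
/-- The weight `w_α(x, a) = x^α e^{-x} ₀F₁(α+1; ax) / Γ(α+1)`. -/
noncomputable def wAlpha (α x a : ℝ) : ℝ :=
  x ^ α * Real.exp (-x) * hyp0F1 (α + 1) (a * x) / Real.Gamma (α + 1)

/-!
Dividing by `Γ(α+1)` turns the weight into `x^α e^{-x} F(α+1, a x)`, where
`F(c, z) = ∑ z^k / (k! Γ(c+k))` is the regularised series `regHyp0F1`. Expanding each
`F(c+ℓ, w)` gives a double series in `(ℓ, k)` whose terms are dominated by
`Γ(c)⁻¹ (|z|/c)^ℓ/ℓ! (|w|/c)^k/k!`, because `Γ(c+n) ≥ cⁿ Γ(c)`. It is therefore absolutely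
summable, and summing it along the antidiagonals `ℓ + k = n` instead, the binomial theorem gives
`∑ₗ z^ℓ/ℓ! F(c+ℓ, w) = F(c, z + w)`. With `z = (a_j - a_i) x`, `w = a_i x` and
`x^(α+ℓ) = x^α x^ℓ` (valid also at `x = 0`, since `α + ℓ ≠ 0` for `ℓ ≥ 1`) this is the claim.
-/

open Finset Real
open scoped Nat

theorem HasSum.sum_antidiagonal {A α : Type*} [AddMonoid A] [HasAntidiagonal A]
    [AddCommMonoid α] [TopologicalSpace α] [ContinuousAdd α] [RegularSpace α]
    {G : A × A → α} {a : α} (h : HasSum G a) :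
    HasSum (fun n => ∑ p ∈ antidiagonal n, G p) a := by
  refine (HasAntidiagonal.sigmaAntidiagonalEquivProd.hasSum_iff.2 h).sigma fun n => ?_
  rw [← sum_coe_sort]
  exact hasSum_fintype _

theorem add_pow_div_factorial {K : Type*} [Field K] [CharZero K] (z w : K) (n : ℕ) :
    (z + w) ^ n / n ! = ∑ p ∈ antidiagonal n, z ^ p.1 / p.1 ! * (w ^ p.2 / p.2 !) := by
  rw [(Commute.all z w).add_pow', sum_div]
  refine sum_congr rfl fun p hp => ?_
  rw [HasAntidiagonal.mem_antidiagonal] at hp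
  subst hp
  have := Nat.cast_ne_zero (R := K) |>.2 (p.1 + p.2).factorial_ne_zero
  rw [nsmul_eq_mul, Nat.cast_add_choose]
  field_simp

theorem Real.Gamma_mul_prod_range_add {c : ℝ} (hc : 0 < c) (k : ℕ) :
    Gamma c * ∏ j ∈ range k, (c + j) = Gamma (c + k) := by
  induction k with
  | zero => simp
  | succ k ih =>
    rw [prod_range_succ, ← mul_assoc, ih, Nat.cast_succ, ← add_assoc,
      Gamma_add_one (by positivity), mul_comm]

theorem Real.pow_mul_Gamma_le_Gamma_add_natCast {c : ℝ} (hc : 0 < c) (n : ℕ) :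
    c ^ n * Gamma c ≤ Gamma (c + n) := by
  rw [← Gamma_mul_prod_range_add hc, mul_comm (Gamma c)]
  refine mul_le_mul_of_nonneg_right ?_ (Gamma_pos_of_pos hc).le
  calc c ^ n = ∏ _j ∈ range n, c := by rw [prod_const, card_range]
      _ ≤ ∏ j ∈ range n, (c + j) :=
        prod_le_prod (fun _ _ => hc.le) fun j _ => le_add_of_nonneg_right j.cast_nonneg

theorem Real.rpow_add_natCast_of_neg_one_lt {x α : ℝ} (hx : 0 ≤ x) (hα : -1 < α)
    (ℓ : ℕ) :
    x ^ (α + ℓ) = x ^ α * x ^ ℓ := by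
  rcases ℓ.eq_zero_or_pos with rfl | hℓ
  · simp
  · have : (1 : ℝ) ≤ ℓ := by exact_mod_cast hℓ
    exact rpow_add_natCast' hx (by linarith)

noncomputable def regHyp0F1 (c z : ℝ) : ℝ :=
  ∑' k : ℕ, z ^ k / k ! / Gamma (c + k)

theorem hyp0F1_div_Gamma {c : ℝ} (hc : 0 < c) (z : ℝ) :
    hyp0F1 c z / Gamma c = regHyp0F1 c z := by
  rw [hyp0F1, ← tsum_div_const]
  refine tsum_congr fun k => ?_
  rw [← Gamma_mul_prod_range_add hc k]
  field_simp

namespace regHyp0F1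

noncomputable def shiftTerm (c z w : ℝ) (p : ℕ × ℕ) : ℝ :=
  z ^ p.1 / p.1 ! * (w ^ p.2 / p.2 ! / Gamma (c + p.1 + p.2))

variable {c : ℝ} (z w : ℝ)

theorem tsum_shiftTerm_fiber (ℓ : ℕ) :
    ∑' k : ℕ, shiftTerm c z w (ℓ, k) = z ^ ℓ / ℓ ! * regHyp0F1 (c + ℓ) w := by
  rw [regHyp0F1, ← tsum_mul_left]
  rfl

theorem sum_antidiagonal_shiftTerm (n : ℕ) :
    ∑ p ∈ antidiagonal n, shiftTerm c z w p = (z + w) ^ n / n ! / Gamma (c + n) := by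
  rw [add_pow_div_factorial, sum_div]
  refine sum_congr rfl fun p hp => ?_
  rw [HasAntidiagonal.mem_antidiagonal] at hp
  rw [shiftTerm, add_assoc, ← Nat.cast_add, hp, mul_div_assoc]

theorem abs_shiftTerm_le (hc : 0 < c) (p : ℕ × ℕ) :
    |shiftTerm c z w p| ≤ (|z| / c) ^ p.1 / p.1 ! * ((|w| / c) ^ p.2 / p.2 !) / Gamma c := by
  obtain ⟨ℓ, k⟩ := p
  have hΓ : c ^ (ℓ + k) * Gamma c ≤ Gamma (c + ℓ + k) := by
    simpa only [Nat.cast_add, ← add_assoc] using pow_mul_Gamma_le_Gamma_add_natCast hc (ℓ + k)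
  calc |shiftTerm c z w (ℓ, k)| = |z| ^ ℓ / ℓ ! * (|w| ^ k / k !) / Gamma (c + ℓ + k) := by
        rw [shiftTerm, abs_mul, abs_div, abs_div, abs_div, abs_pow, abs_pow, Nat.abs_cast,
          Nat.abs_cast, abs_of_pos (Gamma_pos_of_pos (by positivity)), mul_div_assoc]
    _ ≤ |z| ^ ℓ / ℓ ! * (|w| ^ k / k !) / (c ^ (ℓ + k) * Gamma c) := by gcongr
    _ = (|z| / c) ^ ℓ / ℓ ! * ((|w| / c) ^ k / k !) / Gamma c := by
        rw [pow_add, div_pow, div_pow]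
        field_simp

theorem summable_abs_shiftTerm (hc : 0 < c) : Summable fun p => |shiftTerm c z w p| := by
  refine .of_nonneg_of_le (fun _ => abs_nonneg _) (abs_shiftTerm_le z w hc) ?_
  exact ((summable_pow_div_factorial _).mul_of_nonneg (summable_pow_div_factorial _)
    (fun _ => by positivity) fun _ => by positivity).div_const _

theorem hasSum_shift (hc : 0 < c) :
    HasSum (fun ℓ : ℕ => z ^ ℓ / ℓ ! * regHyp0F1 (c + ℓ) w) (regHyp0F1 c (z + w)) := by
  have hG := (summable_abs_shiftTerm z w hc).of_abs
  have hdiag := hG.hasSum.sum_antidiagonal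
  simp only [sum_antidiagonal_shiftTerm] at hdiag
  rw [regHyp0F1, hdiag.tsum_eq]
  refine hG.hasSum.prod_fiberwise fun ℓ => ?_
  rw [← tsum_shiftTerm_fiber]
  exact (hG.prod_factor ℓ).hasSum

theorem summable_abs_shift (hc : 0 < c) :
    Summable fun ℓ : ℕ => |z ^ ℓ / ℓ ! * regHyp0F1 (c + ℓ) w| := by
  have hG := summable_abs_shiftTerm z w hc
  refine .of_nonneg_of_le (fun _ => abs_nonneg _) (fun ℓ => ?_) hG.prod
  have hfiber := hG.prod_factor ℓ
  simp only [← Real.norm_eq_abs] at hfiber ⊢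
  rw [← tsum_shiftTerm_fiber]
  exact norm_tsum_le_tsum_norm hfiber

end regHyp0F1

theorem wAlpha_add_natCast {α x : ℝ} (hα : -1 < α) (hx : 0 ≤ x) (a : ℝ) (ℓ : ℕ) :
    wAlpha (α + ℓ) x a = x ^ α * exp (-x) * (x ^ ℓ * regHyp0F1 (α + 1 + ℓ) (a * x)) := by
  have hc : 0 < α + 1 + ℓ := by linarith [(ℓ.cast_nonneg : (0 : ℝ) ≤ ℓ)]
  rw [wAlpha, mul_div_assoc, add_right_comm, hyp0F1_div_Gamma hc,
    rpow_add_natCast_of_neg_one_lt hx hα]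
  ring

theorem wAlpha_shift_series_general (α : ℝ) (hα : -1 < α) (x : ℝ) (hx : 0 ≤ x)
    (ai aj : ℝ) :
    wAlpha α x aj =
        ∑' ℓ : ℕ, (aj - ai) ^ ℓ / (ℓ.factorial : ℝ) * wAlpha (α + ℓ) x ai ∧
      Summable (fun ℓ : ℕ =>
        |(aj - ai) ^ ℓ / (ℓ.factorial : ℝ) * wAlpha (α + ℓ) x ai|) := by
  have hc : 0 < α + 1 := by linarith
  set A := x ^ α * exp (-x)
  have hterm (ℓ : ℕ) : (aj - ai) ^ ℓ / ℓ ! * wAlpha (α + ℓ) x ai =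
      A * (((aj - ai) * x) ^ ℓ / ℓ ! * regHyp0F1 (α + 1 + ℓ) (ai * x)) := by
    rw [wAlpha_add_natCast hα hx, mul_pow]
    ring
  have hw : wAlpha α x aj = A * regHyp0F1 (α + 1) ((aj - ai) * x + ai * x) := by
    simpa [sub_mul] using wAlpha_add_natCast hα hx aj 0
  simp only [hterm, abs_mul A]
  exact ⟨by rw [hw, tsum_mul_left, (regHyp0F1.hasSum_shift _ _ hc).tsum_eq],
    (regHyp0F1.summable_abs_shift _ _ hc).mul_left |A|⟩

theorem wAlpha_shift_series (α : ℝ) (hα : -1 < α) (x : ℝ) (hx : 0 ≤ x)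
    (ai aj : ℝ) (hai : 0 ≤ ai) (haj : 0 ≤ aj) :
    wAlpha α x aj =
        ∑' ℓ : ℕ, (aj - ai) ^ ℓ / (ℓ.factorial : ℝ) * wAlpha (α + ℓ) x ai ∧
      Summable (fun ℓ : ℕ =>
        |(aj - ai) ^ ℓ / (ℓ.factorial : ℝ) * wAlpha (α + ℓ) x ai|) :=
  wAlpha_shift_series_general α hα x hx ai aj
end

section
/- If eigenvalues (x_1,...,x_N) have joint density proportional to det[η_i(x_j)]det[ξ_i(x_j)] with invertible Gram matrix g, the 1-point function satisfies ρ_{1,N}(x) = K_N(x,x), where K_N(x,y) = ∑_{i,j} η_i(x) c_{ij} ξ_j(y) with c = (g^t)^{−1}. -/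
/-!
Expand both determinants as sums over permutations `σ, τ` and integrate out the last `n`
variables: the `(σ, τ)` term becomes `η_{σ 0}(x) ξ_{τ 0}(x) ∏_{j ≥ 1} g_{σ j, τ j}`. For fixed `σ`
the sum over `τ` is the determinant of `g` with row `σ 0` replaced by `(η_{σ 0}(x) ξ_k(x))_k`, so
the sum over `σ` is `n!` times the sum of these row-replaced determinants. By Cramer's rule the
one with row `a` replaced equals `det g · η_a(x) ∑_k c_{a k} ξ_k(x)`.
-/

open MeasureTheory Finset Equiv
open scoped Matrix

namespace Matrix

variable {ι R : Type*} [Fintype ι] [DecidableEq ι] [CommRing R]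

theorem det_mul_det_eq_sum_perm_sum_perm (A B : Matrix ι ι R) :
    A.det * B.det = ∑ σ : Perm ι, ∑ τ : Perm ι,
      ((Perm.sign σ : ℤ) * (Perm.sign τ : ℤ) : R) * ∏ j, A (σ j) j * B (τ j) j := by
  rw [det_apply', det_apply', sum_mul_sum]
  refine sum_congr rfl fun σ _ => sum_congr rfl fun τ _ => ?_
  rw [mul_mul_mul_comm, ← prod_mul_distrib]

theorem det_eq_sum_perm_sign_mul_sign_mul_prod (M : Matrix ι ι R) (σ : Perm ι) :
    M.det = ∑ τ : Perm ι,
      ((Perm.sign σ : ℤ) * (Perm.sign τ : ℤ) : R) * ∏ j, M (σ j) (τ j) := by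
  have hσ : ((Perm.sign σ : ℤ) : R) * (Perm.sign σ : ℤ) = 1 := by
    rw [← Int.cast_mul, ← Units.val_mul, Int.units_mul_self, Units.val_one, Int.cast_one]
  have hrows : ∑ τ : Perm ι, ((Perm.sign τ : ℤ) : R) * ∏ j, M (σ j) (τ j) =
      (Perm.sign σ : ℤ) * M.det := by
    rw [← det_permute, ← det_transpose, det_apply']
    rfl
  simp_rw [mul_assoc, ← mul_sum, hrows, ← mul_assoc, hσ, one_mul]

theorem adjugate_transpose_eq_det_smul {g c : Matrix ι ι R} (h : g * cᵀ = 1) :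
    gᵀ.adjugate = g.det • c := by
  have hc : c * gᵀ = 1 := by simpa using congrArg transpose h
  calc gᵀ.adjugate = c * gᵀ * gᵀ.adjugate := by rw [hc, one_mul]
    _ = g.det • c := by rw [mul_assoc, mul_adjugate, det_transpose, mul_smul_comm, mul_one]

theorem det_updateRow_eq_det_mul_mulVec {g c : Matrix ι ι R} (h : g * cᵀ = 1) (a : ι)
    (v : ι → R) : (g.updateRow a v).det = g.det * (c *ᵥ v) a := by
  rw [← cramer_transpose_apply, cramer_eq_adjugate_mulVec, adjugate_transpose_eq_det_smul h,
    smul_mulVec, Pi.smul_apply, smul_eq_mul]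

theorem prod_updateRow_perm_zero {S : Type*} [CommMonoid S] {n : ℕ}
    (g : Matrix (Fin (n + 1)) (Fin (n + 1)) S) (v : Fin (n + 1) → S)
    (σ τ : Perm (Fin (n + 1))) :
    ∏ j, g.updateRow (σ 0) v (σ j) (τ j) = v (τ 0) * ∏ j : Fin n, g (σ j.succ) (τ j.succ) := by
  rw [Fin.prod_univ_succ, updateRow_self]
  congr 1
  exact prod_congr rfl fun j _ => by rw [updateRow_ne (σ.injective.ne (Fin.succ_ne_zero j))]

end Matrix

theorem Equiv.Perm.sum_apply_zero {M : Type*} [AddCommMonoid M] (n : ℕ) (f : Fin (n + 1) → M) :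
    ∑ σ : Perm (Fin (n + 1)), f (σ 0) = n.factorial • ∑ a, f a := by
  rw [← Equiv.sum_comp Perm.decomposeFin.symm, Fintype.sum_prod_type]
  simp only [Perm.decomposeFin_symm_apply_zero, sum_const, card_univ, Fintype.card_perm,
    Fintype.card_fin, smul_sum]

section FinCons

variable {α 𝕜 : Type*} [MeasurableSpace α] [RCLike 𝕜] {μ : Measure α} [SigmaFinite μ] {n : ℕ}

theorem integrable_prod_fin_cons {φ : Fin (n + 1) → α → 𝕜}
    (hφ : ∀ j : Fin n, Integrable (φ j.succ) μ) (x : α) :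
    Integrable (fun y : Fin n → α => ∏ j, φ j ((Fin.cons x y : Fin (n + 1) → α) j))
      (Measure.pi fun _ => μ) := by
  simp only [Fin.prod_univ_succ, Fin.cons_zero, Fin.cons_succ]
  exact (Integrable.fintype_prod hφ).const_mul _

theorem integral_prod_fin_cons (φ : Fin (n + 1) → α → 𝕜) (x : α) :
    ∫ y : Fin n → α, ∏ j, φ j ((Fin.cons x y : Fin (n + 1) → α) j) ∂(Measure.pi fun _ => μ) =
      φ 0 x * ∏ j : Fin n, ∫ t, φ j.succ t ∂μ := by
  simp only [Fin.prod_univ_succ, Fin.cons_zero, Fin.cons_succ]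
  rw [integral_const_mul, integral_fintype_prod_eq_prod]

theorem integral_det_mul_det_fin_cons {η ξ : Fin (n + 1) → α → 𝕜}
    (hint : ∀ i j, Integrable (fun t => η i t * ξ j t) μ)
    {g : Matrix (Fin (n + 1)) (Fin (n + 1)) 𝕜} (hg : ∀ i j, g i j = ∫ t, η i t * ξ j t ∂μ)
    (x : α) :
    ∫ y : Fin n → α, (Matrix.of fun i j => η i ((Fin.cons x y : Fin (n + 1) → α) j)).det *
        (Matrix.of fun i j => ξ i ((Fin.cons x y : Fin (n + 1) → α) j)).det
        ∂(Measure.pi fun _ => μ) =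
      n.factorial * ∑ a, (g.updateRow a fun k => η a x * ξ k x).det := by
  have hprod (σ τ : Perm (Fin (n + 1))) :
      Integrable (fun y : Fin n → α => ∏ j, η (σ j) ((Fin.cons x y : Fin (n + 1) → α) j) *
        ξ (τ j) ((Fin.cons x y : Fin (n + 1) → α) j)) (Measure.pi fun _ => μ) :=
    integrable_prod_fin_cons (φ := fun j t => η (σ j) t * ξ (τ j) t) (fun j => hint _ _) x
  simp_rw [Matrix.det_mul_det_eq_sum_perm_sum_perm, Matrix.of_apply]
  rw [integral_finsetSum _ fun σ _ => integrable_finsetSum _ fun τ _ => (hprod σ τ).const_mul _]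
  calc _ = ∑ σ : Perm (Fin (n + 1)), (g.updateRow (σ 0) fun k => η (σ 0) x * ξ k x).det :=
        sum_congr rfl fun σ _ => ?_
    _ = _ := by
      rw [Perm.sum_apply_zero n fun a => (g.updateRow a fun k => η a x * ξ k x).det,
        nsmul_eq_mul]
  rw [integral_finsetSum _ fun τ _ => (hprod σ τ).const_mul _,
    Matrix.det_eq_sum_perm_sign_mul_sign_mul_prod _ σ]
  refine sum_congr rfl fun τ _ => ?_
  rw [integral_const_mul, integral_prod_fin_cons (fun j t => η (σ j) t * ξ (τ j) t),
    Matrix.prod_updateRow_perm_zero]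
  simp_rw [hg]

end FinCons

open MeasureTheory Finset in
theorem one_point_function_eq_kernel_general (n : ℕ) (I : Set ℝ)
    (η ξ : Fin (n + 1) → ℝ → ℝ)
    (hint : ∀ i j, IntegrableOn (fun x => η i x * ξ j x) I)
    (g c : Matrix (Fin (n + 1)) (Fin (n + 1)) ℝ)
    (hg : ∀ i j, g i j = ∫ x in I, η i x * ξ j x)
    (hc : ∀ i j, ∑ k, g i k * c j k = if i = j then (1 : ℝ) else 0)
    (p : (Fin (n + 1) → ℝ) → ℝ)
    (hp : ∀ v, p v =
      (Matrix.of fun i j : Fin (n + 1) => η i (v j)).det *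
        (Matrix.of fun i j : Fin (n + 1) => ξ i (v j)).det /
          ((n + 1).factorial * g.det))
    (K : ℝ → ℝ → ℝ)
    (hK : ∀ x y, K x y = ∑ i, ∑ j, η i x * c i j * ξ j y)
    (x : ℝ) :
    (n + 1 : ℝ) *
        ∫ y : Fin n → ℝ in Set.univ.pi fun _ => I, p (Fin.cons x y) =
      K x x := by
  have hgc : g * cᵀ = 1 := by
    ext i j
    simpa [Matrix.mul_apply, Matrix.one_apply] using hc i j
  have hrows : ∑ a, (g.updateRow a fun k => η a x * ξ k x).det = g.det * K x x := by
    simp_rw [Matrix.det_updateRow_eq_det_mul_mulVec hgc, hK, ← mul_sum, Matrix.mulVec,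
      dotProduct, mul_left_comm (c _ _), mul_assoc]
  have hdet : g.det ≠ 0 := Matrix.det_ne_zero_of_right_inverse hgc
  simp_rw [hp, integral_div]
  rw [volume_pi, Measure.restrict_pi_pi, integral_det_mul_det_fin_cons hint hg, hrows,
    Nat.factorial_succ]
  push_cast
  field_simp

open MeasureTheory Finset in
theorem one_point_function_eq_kernel (n : ℕ) (I : Set ℝ) (hI : MeasurableSet I)
    (η ξ : Fin (n + 1) → ℝ → ℝ)
    (hηm : ∀ i, Measurable (η i)) (hξm : ∀ i, Measurable (ξ i))
    (hint : ∀ i j, IntegrableOn (fun x => η i x * ξ j x) I)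
    (g c : Matrix (Fin (n + 1)) (Fin (n + 1)) ℝ)
    (hg : ∀ i j, g i j = ∫ x in I, η i x * ξ j x)
    (hc : ∀ i j, ∑ k, g i k * c j k = if i = j then (1 : ℝ) else 0)
    (p : (Fin (n + 1) → ℝ) → ℝ)
    (hp : ∀ v, p v =
      (Matrix.of fun i j : Fin (n + 1) => η i (v j)).det *
        (Matrix.of fun i j : Fin (n + 1) => ξ i (v j)).det /
          ((n + 1).factorial * g.det))
    (K : ℝ → ℝ → ℝ)
    (hK : ∀ x y, K x y = ∑ i, ∑ j, η i x * c i j * ξ j y)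
    (x : ℝ) (hx : x ∈ I) :
    (n + 1 : ℝ) *
        ∫ y : Fin n → ℝ in Set.univ.pi fun _ => I, p (Fin.cons x y) =
      K x x :=
  one_point_function_eq_kernel_general n I η ξ hint g c hg hc p hp K hK x
end
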